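/- The area of the intersection of two disks of equal radius θ in ℝ² whose centers are at distance v, with 0 ≤ v ≤ 2θ, equals 2θ² arccos(v/(2θ)) − v√(θ² − v²/4). -/

import Mathlib

/-!
An isometry of the plane moves the centres to `(∓v/2, 0)`. The vertical slice of the resulting
lens at abscissa `a` is the segment `b ^ 2 ≤ θ ^ 2 - (|a| + v/2) ^ 2`, of length
`2 √(θ ^ 2 - (|a| + v/2) ^ 2)` (also when the slice is empty:
the radicand is then negative and `√` returns `0`), so by symmetry
in `a` the area is `4 ∫_{v/2}^θ √(θ ^ 2 - t ^ 2) dt`, which the primitive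
`(t √(θ ^ 2 - t ^ 2) - θ ^ 2 arccos (t/θ)) / 2` evaluates.
-/

open MeasureTheory Real Set Metric Module

section
variable {E : Type*} [NormedAddCommGroup E] [InnerProductSpace ℝ E]

theorem exists_isometryEquiv_apply_eq_of_dist_eq {x y x' y' : E} (h : dist x y = dist x' y') :
    ∃ f : E ≃ᵢ E, f x = x' ∧ f y = y' := by
  let R := Submodule.reflection (ℝ ∙ ((y - x) - (y' - x')))ᗮ
  have hR : R (y - x) = y' - x' :=
    Submodule.reflection_sub (by rw [← dist_eq_norm, ← dist_eq_norm, dist_comm, h, dist_comm])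
  refine ⟨(IsometryEquiv.subRight x).trans (R.toIsometryEquiv.trans (IsometryEquiv.addRight x')),
    ?_, ?_⟩
  · simp
  · simp [hR]

variable [FiniteDimensional ℝ E] [MeasurableSpace E] [BorelSpace E]

theorem Isometry.volume_image {f : E → E} (hf : Isometry f) (s : Set E) :
    volume (f '' s) = volume s := by
  simpa only [InnerProductSpace.euclideanHausdorffMeasure_eq_volume] using
    hf.euclideanHausdorffMeasure_image (d := finrank ℝ E) s

theorem volume_closedBall_inter_closedBall_congr {x y x' y' : E} (h : dist x y = dist x' y')
    (r s : ℝ) :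
    volume (closedBall x r ∩ closedBall y s) = volume (closedBall x' r ∩ closedBall y' s) := by
  obtain ⟨f, hx, hy⟩ := exists_isometryEquiv_apply_eq_of_dist_eq h
  rw [← f.isometry.volume_image, image_inter f.injective, f.image_closedBall, f.image_closedBall,
    hx, hy]
end

theorem EuclideanSpace.mem_closedBall_fin_two {z c : EuclideanSpace ℝ (Fin 2)} {r : ℝ}
    (hr : 0 ≤ r) : z ∈ closedBall c r ↔ (z 0 - c 0) ^ 2 + (z 1 - c 1) ^ 2 ≤ r ^ 2 := by
  rw [mem_closedBall, EuclideanSpace.dist_eq, sqrt_le_left hr]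
  simp [Fin.sum_univ_two, Real.dist_eq, sq_abs]

theorem hasDerivAt_primitive_sqrt_sq_sub_sq {r t : ℝ} (hr : 0 < r) (ht : t ∈ Ioo (-r) r) :
    HasDerivAt (fun t ↦ (t * √(r ^ 2 - t ^ 2) - r ^ 2 * arccos (t / r)) / 2)
      √(r ^ 2 - t ^ 2) t := by
  obtain ⟨hlt, hgt⟩ := ht
  have hpos : 0 < r ^ 2 - t ^ 2 := by nlinarith
  have hsqrt : HasDerivAt (fun t ↦ √(r ^ 2 - t ^ 2)) (-(2 * t) / (2 * √(r ^ 2 - t ^ 2))) t := by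
    simpa using ((hasDerivAt_pow 2 t).const_sub (r ^ 2)).sqrt hpos.ne'
  have harccos : HasDerivAt (fun t ↦ arccos (t / r)) (-(1 / √(1 - (t / r) ^ 2)) * (1 / r)) t :=
    (hasDerivAt_arccos (by rw [ne_eq, div_eq_iff hr.ne']; linarith)
      (by rw [ne_eq, div_eq_one_iff_eq hr.ne']; exact hgt.ne)).comp t
      ((hasDerivAt_id t).div_const r)
  have hscale : √(1 - (t / r) ^ 2) = √(r ^ 2 - t ^ 2) / r := by
    rw [show 1 - (t / r) ^ 2 = (r ^ 2 - t ^ 2) / r ^ 2 by field_simp, sqrt_div hpos.le,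
      sqrt_sq hr.le]
  have hsum := (((hasDerivAt_id t).mul hsqrt).sub (harccos.const_mul (r ^ 2))).div_const 2
  refine hsum.congr_deriv ?_
  rw [hscale]
  field_simp
  rw [sq_sqrt hpos.le]
  simp only [id_eq, sub_neg_eq_add]
  ring

theorem integral_sqrt_sq_sub_sq {r c : ℝ} (hr : 0 < r) (hc : -r ≤ c) (hcr : c ≤ r) :
    ∫ t in c..r, √(r ^ 2 - t ^ 2) = (r ^ 2 * arccos (c / r) - c * √(r ^ 2 - c ^ 2)) / 2 := by
  have hcont : Continuous fun t : ℝ ↦ √(r ^ 2 - t ^ 2) := by fun_prop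
  rw [intervalIntegral.integral_eq_sub_of_hasDerivAt_of_le hcr (by fun_prop)
    (fun t ht ↦ hasDerivAt_primitive_sqrt_sq_sub_sq hr (Ioo_subset_Ioo hc le_rfl ht))
    (hcont.intervalIntegrable _ _)]
  simp only [sub_self, sqrt_zero, mul_zero, div_self hr.ne', arccos_one, zero_div, zero_sub]
  ring

def lens (c r : ℝ) : Set (ℝ × ℝ) :=
  {q | (q.1 + c) ^ 2 + q.2 ^ 2 ≤ r ^ 2 ∧ (q.1 - c) ^ 2 + q.2 ^ 2 ≤ r ^ 2}

theorem isClosed_lens (c r : ℝ) : IsClosed (lens c r) := by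
  rw [lens, ofPred_and]
  exact (isClosed_le (by fun_prop) (by fun_prop)).inter (isClosed_le (by fun_prop) (by fun_prop))

theorem preimage_prodMk_lens {c : ℝ} (hc : 0 ≤ c) (r a : ℝ) :
    Prod.mk a ⁻¹' lens c r = {b | b ^ 2 ≤ r ^ 2 - (|a| + c) ^ 2} := by
  ext b
  simp only [lens, mem_preimage, mem_ofPred_eq]
  rcases le_total 0 a with ha | ha
  · rw [abs_of_nonneg ha]
    constructor
    · rintro ⟨h, -⟩; linarith
    · intro h; constructor <;> nlinarith
  · rw [abs_of_nonpos ha]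
    constructor
    · rintro ⟨-, h⟩; linarith
    · intro h; constructor <;> nlinarith

theorem Real.volume_setOf_sq_le (s : ℝ) : volume {b : ℝ | b ^ 2 ≤ s} = .ofReal (2 * √s) := by
  rcases lt_or_ge s 0 with hs | hs
  · have : {b : ℝ | b ^ 2 ≤ s} = ∅ := eq_empty_of_forall_notMem fun b hb ↦
      (sq_nonneg b).not_gt (lt_of_le_of_lt hb hs)
    simp [this, sqrt_eq_zero'.2 hs.le]
  · have : {b : ℝ | b ^ 2 ≤ s} = Icc (-√s) √s := by
      ext b; exact sq_le hs
    rw [this, volume_Icc]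
    ring_nf

theorem lintegral_ofReal_comp_abs {f : ℝ → ℝ} (hf : Continuous f) (hf_nonneg : ∀ t, 0 ≤ f t)
    {L : ℝ} (hL : 0 ≤ L) (hf_zero : ∀ t, L ≤ t → f t = 0) :
    ∫⁻ a, .ofReal (f |a|) = .ofReal (2 * ∫ t in 0..L, f t) := by
  have hint : Integrable fun a ↦ f |a| := by
    refine (hf.comp continuous_abs).integrable_of_hasCompactSupport
      (HasCompactSupport.intro (isCompact_Icc (a := -L) (b := L)) fun a ha ↦ hf_zero _ ?_)
    rw [mem_Icc, ← abs_le, not_le] at ha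
    exact ha.le
  rw [← ofReal_integral_eq_lintegral_ofReal hint (ae_of_all _ fun a ↦ hf_nonneg _),
    integral_comp_abs, intervalIntegral.integral_of_le hL,
    setIntegral_eq_of_subset_of_forall_sdiff_eq_zero measurableSet_Ioi Ioc_subset_Ioi_self
      fun t ht ↦ hf_zero t ?_]
  simp only [mem_sdiff, mem_Ioi, mem_Ioc, not_and, not_le] at ht
  exact (ht.2 ht.1).le

theorem volume_lens {c r : ℝ} (hc : 0 ≤ c) (hcr : c ≤ r) :
    volume (lens c r) = .ofReal (4 * ∫ t in c..r, √(r ^ 2 - t ^ 2)) := by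
  have hsection (a : ℝ) :
      volume (Prod.mk a ⁻¹' lens c r) = .ofReal (2 * √(r ^ 2 - (|a| + c) ^ 2)) := by
    rw [preimage_prodMk_lens hc, volume_setOf_sq_le]
  rw [Measure.volume_eq_prod, Measure.prod_apply (isClosed_lens c r).measurableSet]
  simp_rw [hsection]
  rw [lintegral_ofReal_comp_abs (f := fun t ↦ 2 * √(r ^ 2 - (t + c) ^ 2)) (by fun_prop)
    (fun t ↦ by positivity) (sub_nonneg.2 hcr) fun t ht ↦ ?_]
  · rw [intervalIntegral.integral_const_mul,
      intervalIntegral.integral_comp_add_right (fun t ↦ √(r ^ 2 - t ^ 2)), zero_add,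
      sub_add_cancel, ← mul_assoc]
    norm_num
  · rw [sqrt_eq_zero'.2 (by nlinarith), mul_zero]

theorem EuclideanSpace.volume_closedBall_inter_closedBall_eq_lens {c r : ℝ} (hr : 0 ≤ r) :
    volume (closedBall !₂[-c, 0] r ∩ closedBall !₂[c, 0] r) = volume (lens c r) := by
  have hmp := (volume_preserving_finTwoArrow ℝ).comp
    (EuclideanSpace.volume_preserving_symm_measurableEquiv_toLp (Fin 2))
  rw [← hmp.measure_preimage (isClosed_lens c r).measurableSet.nullMeasurableSet]
  congr 1
  ext z
  simp [lens, EuclideanSpace.mem_closedBall_fin_two hr]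

/-- The area of the intersection of two disks of equal radius `θ` in `ℝ²` whose
centers are at distance `v`, with `0 ≤ v ≤ 2θ`, equals
`2θ² arccos(v/(2θ)) − v √(θ² − v²/4)`. -/
theorem disk_intersection_area
    (θ v : ℝ) (hθ : 0 < θ) (hv0 : 0 ≤ v) (hv2 : v ≤ 2 * θ)
    (x y : EuclideanSpace ℝ (Fin 2)) (hxy : dist x y = v) :
    (volume (Metric.closedBall x θ ∩ Metric.closedBall y θ)).toReal
      = 2 * θ ^ 2 * Real.arccos (v / (2 * θ)) - v * Real.sqrt (θ ^ 2 - v ^ 2 / 4) := by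
  have hdist : dist x y = dist (!₂[-(v / 2), 0] : EuclideanSpace ℝ (Fin 2)) !₂[v / 2, 0] := by
    rw [hxy, EuclideanSpace.dist_eq]
    norm_num [Fin.sum_univ_two, Real.dist_eq, sq_abs]
    rw [← neg_add', add_halves, neg_sq, sqrt_sq hv0]
  have hint : 0 ≤ ∫ t in v / 2..θ, √(θ ^ 2 - t ^ 2) :=
    intervalIntegral.integral_nonneg (by linarith) fun t _ ↦ sqrt_nonneg _
  rw [volume_closedBall_inter_closedBall_congr hdist,
    EuclideanSpace.volume_closedBall_inter_closedBall_eq_lens hθ.le,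
    volume_lens (by positivity) (by linarith), ENNReal.toReal_ofReal (by positivity),
    integral_sqrt_sq_sub_sq hθ (by linarith) (by linarith), div_div]
  ring_nf
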